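/- Let D_T be a probability density on (0,∞) satisfying D_T(x) = r₁·x^{−r₃}·exp{r₂·√(log x)}·(log x)^{r₄}·(1 + O((log x)^{−1/2})) as x → ∞, where r₁ > 0, r₂ ≥ 0, r₃ > 2, and r₄ ∈ ℝ. Then the call pricing function C(K) = ∫_0^∞ max(x − K, 0)·D_T(x) dx satisfies C(K) = (r₁/((r₃−1)(r₃−2)))·(log K)^{r₄}·exp{r₂·√(log K)}·K^{2−r₃}·(1 + O((log K)^{−1/2})) as K → ∞. -/

import Mathlib

open Filter Asymptotics MeasureTheory

section CallPricingAux
open Set Real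
lemma aux_integrable {s K : ℝ} (hs : 2 < s) (hK : 0 < K) :
    IntegrableOn (fun x => (x - K) * x ^ (-s)) (Set.Ioi K) := by
  have h1 : IntegrableOn (fun x : ℝ => x ^ (1-s)) (Set.Ioi K) :=
    integrableOn_Ioi_rpow_of_lt (by linarith) hK
  have h2 : IntegrableOn (fun x : ℝ => K * x ^ (-s)) (Set.Ioi K) :=
    (integrableOn_Ioi_rpow_of_lt (by linarith) hK).smul K
  refine IntegrableOn.congr_fun (h1.sub h2) (fun x hx => ?_) measurableSet_Ioi
  have hx0 : (0:ℝ) < x := hK.trans hx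
  simp only [Pi.sub_apply]
  rw [show (1-s) = 1 + (-s) by ring, Real.rpow_add hx0, Real.rpow_one]
  ring

lemma aux_integral {s K : ℝ} (hs : 2 < s) (hK : 0 < K) :
    ∫ x in Set.Ioi K, (x - K) * x ^ (-s) = K ^ (2-s) / ((s-1)*(s-2)) := by
  have h1 : IntegrableOn (fun x : ℝ => x ^ (1-s)) (Set.Ioi K) :=
    integrableOn_Ioi_rpow_of_lt (by linarith) hK
  have h2 : IntegrableOn (fun x : ℝ => K * x ^ (-s)) (Set.Ioi K) :=
    (integrableOn_Ioi_rpow_of_lt (by linarith) hK).smul K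
  have heq : ∫ x in Set.Ioi K, (x - K) * x ^ (-s)
      = ∫ x in Set.Ioi K, (x ^ (1-s) - K * x ^ (-s)) := by
    refine setIntegral_congr_fun measurableSet_Ioi (fun x hx => ?_)
    have hx0 : (0:ℝ) < x := hK.trans hx
    rw [show (1-s) = 1 + (-s) by ring, Real.rpow_add hx0, Real.rpow_one]
    ring
  have hint2 : ∫ x in Set.Ioi K, K * x ^ (-s) = K * ∫ x in Set.Ioi K, x ^ (-s) :=
    integral_const_mul K _
  rw [heq, integral_sub h1 h2, hint2,
    integral_Ioi_rpow_of_lt (by linarith : (1-s) < -1) hK,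
    integral_Ioi_rpow_of_lt (by linarith : (-s) < -1) hK]
  have e2 : K ^ (2-s) = K * K ^ (-s+1) := by
    rw [show (2-s) = 1 + (-s+1) by ring, Real.rpow_add hK, Real.rpow_one]
  rw [show (1-s+1) = 2-s by ring, e2]
  have h1 : s - 1 ≠ 0 := by linarith
  have h2 : s - 2 ≠ 0 := by linarith
  have h3 : (2:ℝ) - s ≠ 0 := by linarith
  have h4 : -s + 1 ≠ 0 := by linarith
  field_simp
  ring

-- exponent comparison: r₂(√M-√L) + r₄(log M - log L) ≤ δ (M-L), with M ≥ L ≥ 1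
lemma exponent_bound {r₂ r₄ δ L M : ℝ} (hr₂ : 0 ≤ r₂) (hL : 1 ≤ L) (hM : L ≤ M)
    (hδ : r₂ / (2 * Real.sqrt L) + |r₄| / L ≤ δ) :
    r₂ * (Real.sqrt M - Real.sqrt L) + r₄ * (Real.log M - Real.log L) ≤ δ * (M - L) := by
  have hL0 : (0:ℝ) < L := by linarith
  have hM0 : (0:ℝ) < M := by linarith
  have hsL : 1 ≤ Real.sqrt L := by
    rw [show (1:ℝ) = Real.sqrt 1 by simp]; exact Real.sqrt_le_sqrt hL
  have hsL0 : 0 < Real.sqrt L := by linarith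
  have hsM : Real.sqrt L ≤ Real.sqrt M := Real.sqrt_le_sqrt hM
  have hsqL : Real.sqrt L ^ 2 = L := Real.sq_sqrt hL0.le
  have hsqM : Real.sqrt M ^ 2 = M := Real.sq_sqrt hM0.le
  -- √M - √L ≤ (M-L)/(2√L)
  have f1 : Real.sqrt M - Real.sqrt L ≤ (M - L) / (2 * Real.sqrt L) := by
    rw [le_div_iff₀ (by positivity)]
    nlinarith [hsM, hsL0]
  -- 0 ≤ log M - log L ≤ (M-L)/L
  have f2a : Real.log L ≤ Real.log M := Real.log_le_log hL0 hM
  have f2 : Real.log M - Real.log L ≤ (M - L) / L := by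
    have h := Real.log_le_sub_one_of_pos (show 0 < M / L by positivity)
    rw [Real.log_div hM0.ne' hL0.ne'] at h
    have : M / L - 1 = (M - L) / L := by field_simp
    linarith [this ▸ h]
  have h1 : r₂ * (Real.sqrt M - Real.sqrt L) ≤ r₂ * ((M - L) / (2 * Real.sqrt L)) :=
    mul_le_mul_of_nonneg_left f1 hr₂
  have h2 : r₄ * (Real.log M - Real.log L) ≤ |r₄| * ((M - L) / L) := by
    calc r₄ * (Real.log M - Real.log L) ≤ |r₄ * (Real.log M - Real.log L)| := le_abs_self _
    _ = |r₄| * |Real.log M - Real.log L| := abs_mul _ _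
    _ = |r₄| * (Real.log M - Real.log L) := by rw [abs_of_nonneg (show (0:ℝ) ≤ Real.log M - Real.log L by linarith)]
    _ ≤ |r₄| * ((M - L) / L) := mul_le_mul_of_nonneg_left f2 (abs_nonneg _)
  have h3 : r₂ * ((M - L) / (2 * Real.sqrt L)) + |r₄| * ((M - L) / L)
      = (r₂ / (2 * Real.sqrt L) + |r₄| / L) * (M - L) := by ring
  have h4 : (r₂ / (2 * Real.sqrt L) + |r₄| / L) * (M - L) ≤ δ * (M - L) :=
    mul_le_mul_of_nonneg_right hδ (by linarith)
  linarith

lemma exponent_bound' {r₂ r₄ δ L M : ℝ} (hr₂ : 0 ≤ r₂) (hL : 1 ≤ L) (hM : L ≤ M)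
    (hδ : r₂ / (2 * Real.sqrt L) + |r₄| / L ≤ δ) :
    -(δ * (M - L)) ≤ r₂ * (Real.sqrt M - Real.sqrt L) + r₄ * (Real.log M - Real.log L) := by
  have hL0 : (0:ℝ) < L := by linarith
  have hM0 : (0:ℝ) < M := by linarith
  have hsM : Real.sqrt L ≤ Real.sqrt M := Real.sqrt_le_sqrt hM
  have f2a : Real.log L ≤ Real.log M := Real.log_le_log hL0 hM
  have f2 : Real.log M - Real.log L ≤ (M - L) / L := by
    have h := Real.log_le_sub_one_of_pos (show 0 < M / L by positivity)
    rw [Real.log_div hM0.ne' hL0.ne'] at h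
    have : M / L - 1 = (M - L) / L := by field_simp
    linarith [this ▸ h]
  have h1 : 0 ≤ r₂ * (Real.sqrt M - Real.sqrt L) := by
    apply mul_nonneg hr₂; linarith
  have h2 : -(|r₄| * ((M - L) / L)) ≤ r₄ * (Real.log M - Real.log L) := by
    rw [neg_le]
    calc -(r₄ * (Real.log M - Real.log L)) ≤ |r₄ * (Real.log M - Real.log L)| := neg_le_abs _
    _ = |r₄| * |Real.log M - Real.log L| := abs_mul _ _
    _ = |r₄| * (Real.log M - Real.log L) := by rw [abs_of_nonneg (show (0:ℝ) ≤ Real.log M - Real.log L by linarith)]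
    _ ≤ |r₄| * ((M - L) / L) := mul_le_mul_of_nonneg_left f2 (abs_nonneg _)
  have hδ0 : 0 ≤ δ := le_trans (by positivity) hδ
  have h4 : |r₄| * ((M - L) / L) ≤ δ * (M - L) := by
    have : |r₄| / L * (M - L) ≤ δ * (M - L) := by
      apply mul_le_mul_of_nonneg_right _ (by linarith)
      have : 0 ≤ r₂ / (2 * Real.sqrt L) := by positivity
      linarith
    linarith [this, show |r₄| * ((M - L) / L) = |r₄| / L * (M - L) by ring]
  linarith

lemma frac_bound_upper {s δ : ℝ} (hs : 2 < s) (hδ0 : 0 ≤ δ) (hδ : δ ≤ (s-2)/2) :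
    1/((s-δ-1)*(s-δ-2)) - 1/((s-1)*(s-2))
      ≤ (12*s/((s-2)^2*((s-1)*(s-2)))) * δ := by
  have h1 : (s-2)/2 ≤ s - δ - 2 := by linarith
  have h2 : 0 < s - δ - 2 := by linarith
  have h3 : 0 < s - δ - 1 := by linarith
  have h4 : 0 < s - 1 := by linarith
  have h5 : 0 < s - 2 := by linarith
  have ha : 0 < (s-δ-1)*(s-δ-2) := mul_pos h3 h2
  have hb : 0 < (s-1)*(s-2) := mul_pos h4 h5
  have hab : (s-δ-1)*(s-δ-2) ≤ (s-1)*(s-2) := by nlinarith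
  have heq : 1/((s-δ-1)*(s-δ-2)) - 1/((s-1)*(s-2))
      = ((s-1)*(s-2) - (s-δ-1)*(s-δ-2)) / ((s-δ-1)*(s-δ-2)*((s-1)*(s-2))) := by
    field_simp
  rw [heq]
  have hnum : (s-1)*(s-2) - (s-δ-1)*(s-δ-2) ≤ 3*s*δ := by nlinarith
  have hden : ((s-2)^2/4)*((s-1)*(s-2)) ≤ (s-δ-1)*(s-δ-2)*((s-1)*(s-2)) := by
    apply mul_le_mul_of_nonneg_right _ hb.le
    nlinarith
  have hdenpos : 0 < ((s-2)^2/4)*((s-1)*(s-2)) := by positivity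
  calc ((s-1)*(s-2) - (s-δ-1)*(s-δ-2)) / ((s-δ-1)*(s-δ-2)*((s-1)*(s-2)))
      ≤ (3*s*δ) / (((s-2)^2/4)*((s-1)*(s-2))) :=
        div_le_div₀ (by positivity) hnum hdenpos hden
    _ = (12*s/((s-2)^2*((s-1)*(s-2)))) * δ := by field_simp; ring

lemma frac_bound_lower {s δ : ℝ} (hs : 2 < s) (hδ0 : 0 ≤ δ) (hδ : δ ≤ (s-2)/2) :
    1/((s-1)*(s-2)) - 1/((s+δ-1)*(s+δ-2))
      ≤ (12*s/((s-2)^2*((s-1)*(s-2)))) * δ := by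
  have h2 : 0 < s + δ - 2 := by linarith
  have h3 : 0 < s + δ - 1 := by linarith
  have h4 : 0 < s - 1 := by linarith
  have h5 : 0 < s - 2 := by linarith
  have ha : 0 < (s+δ-1)*(s+δ-2) := mul_pos h3 h2
  have hb : 0 < (s-1)*(s-2) := mul_pos h4 h5
  have heq : 1/((s-1)*(s-2)) - 1/((s+δ-1)*(s+δ-2))
      = ((s+δ-1)*(s+δ-2) - (s-1)*(s-2)) / ((s-1)*(s-2)*((s+δ-1)*(s+δ-2))) := by
    field_simp
  rw [heq]
  have hnum : (s+δ-1)*(s+δ-2) - (s-1)*(s-2) ≤ 3*s*δ := by nlinarith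
  have hden : ((s-2)^2/4)*((s-1)*(s-2)) ≤ (s-1)*(s-2)*((s+δ-1)*(s+δ-2)) := by
    rw [mul_comm (((s-2)^2/4)) _]
    apply mul_le_mul_of_nonneg_left _ hb.le
    nlinarith
  have hdenpos : 0 < ((s-2)^2/4)*((s-1)*(s-2)) := by positivity
  calc ((s+δ-1)*(s+δ-2) - (s-1)*(s-2)) / ((s-1)*(s-2)*((s+δ-1)*(s+δ-2)))
      ≤ (3*s*δ) / (((s-2)^2/4)*((s-1)*(s-2))) :=
        div_le_div₀ (by positivity) hnum hdenpos hden
    _ = (12*s/((s-2)^2*((s-1)*(s-2)))) * δ := by field_simp; ring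

lemma exp_form {r₁ r₂ r₃ r₄ x : ℝ} (hx : 1 < x) :
    r₁ * x ^ (-r₃) * Real.exp (r₂ * Real.sqrt (Real.log x)) * Real.log x ^ r₄
      = r₁ * Real.exp (Real.log x * (-r₃) + r₂ * Real.sqrt (Real.log x)
          + Real.log (Real.log x) * r₄) := by
  have hx0 : (0:ℝ) < x := by linarith
  have hlx : 0 < Real.log x := Real.log_pos hx
  rw [Real.rpow_def_of_pos hx0, Real.rpow_def_of_pos hlx, Real.exp_add, Real.exp_add]
  ring

lemma sandwich_upper {r₁ r₂ r₃ r₄ δ K x : ℝ} (hr₁ : 0 < r₁) (hr₂ : 0 ≤ r₂)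
    (hK : 1 < K) (hL : 1 ≤ Real.log K)
    (hδ : r₂ / (2 * Real.sqrt (Real.log K)) + |r₄| / Real.log K ≤ δ) (hx : K ≤ x) :
    r₁ * x ^ (-r₃) * Real.exp (r₂ * Real.sqrt (Real.log x)) * Real.log x ^ r₄
      ≤ r₁ * Real.exp (r₂ * Real.sqrt (Real.log K)) * Real.log K ^ r₄ * K ^ (-δ)
          * x ^ (δ - r₃) := by
  have hK0 : (0:ℝ) < K := by linarith
  have hx1 : 1 < x := lt_of_lt_of_le hK hx
  have hx0 : (0:ℝ) < x := by linarith
  have hM : Real.log K ≤ Real.log x := Real.log_le_log hK0 hx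
  have hLK : 0 < Real.log K := by linarith
  have hRHS : r₁ * Real.exp (r₂ * Real.sqrt (Real.log K)) * Real.log K ^ r₄ * K ^ (-δ)
      * x ^ (δ - r₃)
      = r₁ * Real.exp (r₂ * Real.sqrt (Real.log K) + Real.log (Real.log K) * r₄
          + Real.log K * (-δ) + Real.log x * (δ - r₃)) := by
    rw [Real.rpow_def_of_pos hLK, Real.rpow_def_of_pos hK0, Real.rpow_def_of_pos hx0,
      Real.exp_add, Real.exp_add, Real.exp_add]
    ring
  rw [exp_form hx1, hRHS]
  apply mul_le_mul_of_nonneg_left _ hr₁.le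
  rw [Real.exp_le_exp]
  have := exponent_bound (r₄ := r₄) (δ := δ) hr₂ hL hM hδ
  nlinarith [this]

lemma sandwich_lower {r₁ r₂ r₃ r₄ δ K x : ℝ} (hr₁ : 0 < r₁) (hr₂ : 0 ≤ r₂)
    (hK : 1 < K) (hL : 1 ≤ Real.log K)
    (hδ : r₂ / (2 * Real.sqrt (Real.log K)) + |r₄| / Real.log K ≤ δ) (hx : K ≤ x) :
    r₁ * Real.exp (r₂ * Real.sqrt (Real.log K)) * Real.log K ^ r₄ * K ^ δ
          * x ^ (-δ - r₃)
      ≤ r₁ * x ^ (-r₃) * Real.exp (r₂ * Real.sqrt (Real.log x)) * Real.log x ^ r₄ := by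
  have hK0 : (0:ℝ) < K := by linarith
  have hx1 : 1 < x := lt_of_lt_of_le hK hx
  have hx0 : (0:ℝ) < x := by linarith
  have hM : Real.log K ≤ Real.log x := Real.log_le_log hK0 hx
  have hLK : 0 < Real.log K := by linarith
  have hLHS : r₁ * Real.exp (r₂ * Real.sqrt (Real.log K)) * Real.log K ^ r₄ * K ^ δ
      * x ^ (-δ - r₃)
      = r₁ * Real.exp (r₂ * Real.sqrt (Real.log K) + Real.log (Real.log K) * r₄
          + Real.log K * δ + Real.log x * (-δ - r₃)) := by
    rw [Real.rpow_def_of_pos hLK, Real.rpow_def_of_pos hK0, Real.rpow_def_of_pos hx0,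
      Real.exp_add, Real.exp_add, Real.exp_add]
    ring
  rw [exp_form hx1, hLHS]
  apply mul_le_mul_of_nonneg_left _ hr₁.le
  rw [Real.exp_le_exp]
  have := exponent_bound' (r₄ := r₄) (δ := δ) hr₂ hL hM hδ
  nlinarith [this]

lemma dm_lb {s δ : ℝ} (hs : 2 < s) (hδ0 : 0 ≤ δ) (hδ : δ ≤ (s-2)/2) :
    (s-2)^2/4 ≤ (s-δ-1)*(s-δ-2) := by nlinarith
end CallPricingAux

open Set Real

/-- call pricing function asymptotics.  Let `D_T` be a probability
density on `(0,∞)` with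
`D_T(x) = r₁ x^{−r₃} exp{r₂√(log x)} (log x)^{r₄} (1 + O((log x)^{−1/2}))` as `x → ∞`,
where `r₁ > 0`, `r₂ ≥ 0`, `r₃ > 2`, `r₄ ∈ ℝ`.  Then the call pricing function
`C(K) = ∫_0^∞ max(x − K, 0) D_T(x) dx` satisfies
`C(K) = (r₁/((r₃−1)(r₃−2))) (log K)^{r₄} exp{r₂√(log K)} K^{2−r₃}`
`· (1 + O((log K)^{−1/2}))` as `K → ∞`. -/
theorem call_pricing_function_asymptotics
    (DT : ℝ → ℝ) (r₁ r₂ r₃ r₄ : ℝ)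
    (hr₁ : 0 < r₁) (hr₂ : 0 ≤ r₂) (hr₃ : 2 < r₃)
    (hDT_meas : Measurable DT) (hDT_nonneg : ∀ x, 0 ≤ DT x)
    (hDT_prob : (∫ x in Set.Ioi (0:ℝ), DT x) = 1)
    (hDT_asymp : (fun x => DT x -
        r₁ * x ^ (-r₃) * Real.exp (r₂ * Real.sqrt (Real.log x)) * (Real.log x) ^ r₄)
      =O[atTop] (fun x =>
        r₁ * x ^ (-r₃) * Real.exp (r₂ * Real.sqrt (Real.log x)) * (Real.log x) ^ r₄ *
          (Real.log x) ^ (-(1:ℝ)/2))) :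
    (fun K => (∫ x in Set.Ioi (0:ℝ), max (x - K) 0 * DT x) -
        r₁ / ((r₃ - 1) * (r₃ - 2)) * (Real.log K) ^ r₄ *
          Real.exp (r₂ * Real.sqrt (Real.log K)) * K ^ (2 - r₃))
      =O[atTop]
      (fun K =>
        r₁ / ((r₃ - 1) * (r₃ - 2)) * (Real.log K) ^ r₄ *
          Real.exp (r₂ * Real.sqrt (Real.log K)) * K ^ (2 - r₃) *
          (Real.log K) ^ (-(1:ℝ)/2)) := by
  classical
  -- the tail density profile
  set g : ℝ → ℝ := fun x =>
    r₁ * x ^ (-r₃) * Real.exp (r₂ * Real.sqrt (Real.log x)) * Real.log x ^ r₄ with hgdef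
  have hgpos : ∀ x : ℝ, 1 < x → 0 < g x := by
    intro x hx
    have hx0 : (0:ℝ) < x := by linarith
    have hlx : 0 < Real.log x := Real.log_pos hx
    exact mul_pos (mul_pos (mul_pos hr₁ (Real.rpow_pos_of_pos hx0 _)) (Real.exp_pos _))
      (Real.rpow_pos_of_pos hlx _)
  have hgcont : ∀ K' : ℝ, 1 ≤ K' → ContinuousOn g (Ioi K') := by
    intro K' hK'
    have hK'0 : (0:ℝ) < K' := by linarith
    rw [hgdef]
    have h1 : ContinuousOn (fun x : ℝ => x ^ (-r₃)) (Ioi K') := fun x hx =>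
      (Real.continuousAt_rpow_const x _ (Or.inl (hK'0.trans hx).ne')).continuousWithinAt
    have h2 : ContinuousOn (fun x : ℝ => Real.exp (r₂ * Real.sqrt (Real.log x))) (Ioi K') :=
      fun x hx => (Real.continuous_exp.continuousAt.comp (((Real.continuousAt_log (hK'0.trans hx).ne').sqrt).const_mul r₂)).continuousWithinAt
    have h3 : ContinuousOn (fun x : ℝ => Real.log x ^ r₄) (Ioi K') := fun x hx =>
      (ContinuousAt.rpow_const (p := r₄) (Real.continuousAt_log (hK'0.trans hx).ne')
        (Or.inl (Real.log_pos (lt_of_le_of_lt hK' hx)).ne')).continuousWithinAt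
    exact ((continuousOn_const.mul h1).mul h2).mul h3
  -- extract the O-constant
  obtain ⟨c, hc⟩ := hDT_asymp.bound
  rw [eventually_atTop] at hc
  obtain ⟨x₀, hx₀⟩ := hc
  obtain ⟨C₀, hC₀def⟩ : ∃ C₀ : ℝ, C₀ = |c| := ⟨_, rfl⟩
  have hC₀ : 0 ≤ C₀ := hC₀def ▸ abs_nonneg c
  -- constants
  obtain ⟨D, hDdef⟩ : ∃ D : ℝ, D = (r₃ - 1) * (r₃ - 2) := ⟨_, rfl⟩
  have hD : 0 < D := hDdef ▸ mul_pos (by linarith) (by linarith)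
  obtain ⟨c₂, hc₂def⟩ : ∃ c₂ : ℝ, c₂ = 12 * r₃ / ((r₃-2)^2 * D) := ⟨_, rfl⟩
  have hc₂ : 0 < c₂ := by
    rw [hc₂def]
    exact div_pos (by linarith) (mul_pos (pow_pos (by linarith) 2) hD)
  obtain ⟨B, hBdef⟩ : ∃ B : ℝ, B = r₂ / 2 + |r₄| := ⟨_, rfl⟩
  have hB : 0 ≤ B := by rw [hBdef]; positivity
  rw [isBigO_iff]
  refine ⟨D * (C₀ * (4 / (r₃-2)^2) + c₂ * B), ?_⟩
  rw [eventually_atTop]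
  refine ⟨max (max x₀ 2) (Real.exp (max 1 ((2 * B / (r₃ - 2))^2))), fun K hK => ?_⟩
  -- basic facts about K
  have hKx₀ : x₀ ≤ K := le_trans (le_trans (le_max_left _ _) (le_max_left _ _)) hK
  have hK2 : (2:ℝ) ≤ K := le_trans (le_trans (le_max_right _ _) (le_max_left _ _)) hK
  have hK1 : (1:ℝ) < K := by linarith
  have hK0 : (0:ℝ) < K := by linarith
  obtain ⟨L, hLdef⟩ : ∃ L : ℝ, L = Real.log K := ⟨_, rfl⟩
  have hLM : max 1 ((2 * B / (r₃ - 2))^2) ≤ L := by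
    rw [hLdef, Real.le_log_iff_exp_le hK0]
    exact le_trans (le_max_right _ _) hK
  have hL1 : (1:ℝ) ≤ L := le_trans (le_max_left _ _) hLM
  have hL0 : (0:ℝ) < L := by linarith
  have hsL1 : (1:ℝ) ≤ Real.sqrt L := by
    rw [show (1:ℝ) = Real.sqrt 1 by simp]; exact Real.sqrt_le_sqrt hL1
  have hsL0 : (0:ℝ) < Real.sqrt L := by linarith
  have hsLL : Real.sqrt L ≤ L := by
    nlinarith [Real.sq_sqrt hL0.le]
  have hBsqrt : 2 * B / (r₃ - 2) ≤ Real.sqrt L := by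
    have h := Real.sqrt_le_sqrt (le_trans (le_max_right _ _) hLM)
    rwa [Real.sqrt_sq (show (0:ℝ) ≤ 2 * B / (r₃ - 2) by
      apply div_nonneg (by linarith) (by linarith))] at h
  -- the perturbation δ
  obtain ⟨δ, hδdef⟩ : ∃ d : ℝ, d = r₂ / (2 * Real.sqrt L) + |r₄| / L := ⟨_, rfl⟩
  have hδ0 : (0:ℝ) ≤ δ := by rw [hδdef]; positivity
  have hδB : δ ≤ B / Real.sqrt L := by
    rw [hδdef, hBdef]
    have h1 : r₂ / (2 * Real.sqrt L) = (r₂/2) / Real.sqrt L := by ring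
    have h2 : |r₄| / L ≤ |r₄| / Real.sqrt L :=
      div_le_div_of_nonneg_left (abs_nonneg _) hsL0 hsLL
    have h3 := add_div (r₂/2) |r₄| (Real.sqrt L)
    linarith
  have hδhalf : δ ≤ (r₃ - 2) / 2 := by
    refine le_trans hδB ?_
    rw [div_le_iff₀ hsL0]
    rw [div_le_iff₀ (show (0:ℝ) < r₃ - 2 by linarith)] at hBsqrt
    linarith
  have hsm : 2 < r₃ - δ := by linarith
  have hsp : 2 < r₃ + δ := by linarith
  -- main quantities
  obtain ⟨E, hEdef⟩ : ∃ E : ℝ, E = Real.exp (r₂ * Real.sqrt L) := ⟨_, rfl⟩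
  have hE : 0 < E := hEdef ▸ Real.exp_pos _
  have hLr : 0 < L ^ r₄ := Real.rpow_pos_of_pos hL0 _
  obtain ⟨Q, hQdef⟩ : ∃ Q : ℝ, Q = r₁ * E * L ^ r₄ * K ^ (2 - r₃) := ⟨_, rfl⟩
  have hQ : 0 < Q := by
    rw [hQdef]
    apply mul_pos (mul_pos (mul_pos hr₁ hE) hLr) (Real.rpow_pos_of_pos hK0 _)
  obtain ⟨ν, hνdef⟩ : ∃ v : ℝ, v = L ^ (-(1:ℝ)/2) := ⟨_, rfl⟩
  have hν : ν = (Real.sqrt L)⁻¹ := by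
    rw [hνdef, show (-(1:ℝ)/2) = -(1/2 : ℝ) by norm_num, Real.rpow_neg hL0.le,
      Real.sqrt_eq_rpow]
  have hν0 : 0 < ν := by rw [hν]; positivity
  -- pointwise sandwich on (K, ∞)
  have hup : ∀ x ∈ Ioi K, (x - K) * g x
      ≤ (r₁ * E * L ^ r₄ * K ^ (-δ)) * ((x - K) * x ^ (-(r₃ - δ))) := by
    intro x hx
    rw [mem_Ioi] at hx
    have h := sandwich_upper (r₃ := r₃) (δ := δ) hr₁ hr₂ hK1 (hLdef ▸ hL1)
      (le_of_eq (by rw [hδdef, hLdef])) hx.le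
    rw [← hLdef, ← hEdef] at h
    rw [show -(r₃ - δ) = δ - r₃ by ring]
    calc (x - K) * g x ≤ (x - K) * (r₁ * E * L ^ r₄ * K ^ (-δ) * x ^ (δ - r₃)) := by
          apply mul_le_mul_of_nonneg_left _ (by linarith)
          exact h
    _ = (r₁ * E * L ^ r₄ * K ^ (-δ)) * ((x - K) * x ^ (δ - r₃)) := by ring
  have hlo : ∀ x ∈ Ioi K, (r₁ * E * L ^ r₄ * K ^ δ) * ((x - K) * x ^ (-(r₃ + δ)))
      ≤ (x - K) * g x := by
    intro x hx
    rw [mem_Ioi] at hx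
    have h := sandwich_lower (r₃ := r₃) (δ := δ) hr₁ hr₂ hK1 (hLdef ▸ hL1)
      (le_of_eq (by rw [hδdef, hLdef])) hx.le
    rw [← hLdef, ← hEdef] at h
    rw [show -(r₃ + δ) = -δ - r₃ by ring]
    calc (r₁ * E * L ^ r₄ * K ^ δ) * ((x - K) * x ^ (-δ - r₃))
        = (x - K) * (r₁ * E * L ^ r₄ * K ^ δ * x ^ (-δ - r₃)) := by ring
    _ ≤ (x - K) * g x := by
          apply mul_le_mul_of_nonneg_left _ (by linarith)
          exact h
  -- integrability
  have hIu : IntegrableOn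
      (fun x => (r₁ * E * L ^ r₄ * K ^ (-δ)) * ((x - K) * x ^ (-(r₃ - δ)))) (Ioi K) :=
    (aux_integrable hsm hK0).const_mul _
  have hIl : IntegrableOn
      (fun x => (r₁ * E * L ^ r₄ * K ^ δ) * ((x - K) * x ^ (-(r₃ + δ)))) (Ioi K) :=
    (aux_integrable hsp hK0).const_mul _
  have hfg_int : IntegrableOn (fun x => (x - K) * g x) (Ioi K) := by
    apply Integrable.mono' hIu
    · exact (((continuousOn_id.sub continuousOn_const).mul
        (hgcont K (by linarith))).aestronglyMeasurable measurableSet_Ioi)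
    · filter_upwards [ae_restrict_mem measurableSet_Ioi] with x hx
      rw [Real.norm_eq_abs, abs_of_nonneg (mul_nonneg
        (by rw [mem_Ioi] at hx; linarith)
        (hgpos x (lt_trans hK1 (mem_Ioi.mp hx))).le)]
      exact hup x hx
  have hDTle : ∀ x ∈ Ioi K, DT x ≤ (1 + C₀) * g x := by
    intro x hx
    rw [mem_Ioi] at hx
    have hx1 : (1:ℝ) < x := lt_trans hK1 hx
    have hlx1 : (1:ℝ) ≤ Real.log x := by
      calc (1:ℝ) ≤ L := hL1
      _ = Real.log K := hLdef
      _ ≤ Real.log x := Real.log_le_log hK0 hx.le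
    have h := hx₀ x (le_trans hKx₀ hx.le)
    have hgx : 0 < g x := hgpos x hx1
    have hgx_eq : g x
        = r₁ * x ^ (-r₃) * Real.exp (r₂ * Real.sqrt (Real.log x)) * Real.log x ^ r₄ := by
      rw [hgdef]
    rw [← hgx_eq] at h
    rw [Real.norm_eq_abs, Real.norm_eq_abs] at h
    have hpnn : (0:ℝ) ≤ Real.log x ^ (-(1:ℝ)/2) := Real.rpow_nonneg (by linarith) _
    have hpow1 : Real.log x ^ (-(1:ℝ)/2) ≤ 1 :=
      Real.rpow_le_one_of_one_le_of_nonpos hlx1 (by norm_num)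
    have h2 : |DT x - g x| ≤ C₀ * g x := by
      calc |DT x - g x| ≤ c * |g x * Real.log x ^ (-(1:ℝ)/2)| := h
      _ ≤ C₀ * |g x * Real.log x ^ (-(1:ℝ)/2)| :=
            mul_le_mul_of_nonneg_right (hC₀def ▸ le_abs_self c) (abs_nonneg _)
      _ = C₀ * (g x * Real.log x ^ (-(1:ℝ)/2)) := by
            rw [abs_of_nonneg (mul_nonneg hgx.le hpnn)]
      _ ≤ C₀ * (g x * 1) := by
            apply mul_le_mul_of_nonneg_left _ hC₀
            exact mul_le_mul_of_nonneg_left hpow1 hgx.le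
      _ = C₀ * g x := by ring
    have := abs_le.mp h2
    linarith [this.2]
  have hfDT_int : IntegrableOn (fun x => (x - K) * DT x) (Ioi K) := by
    apply Integrable.mono' (hfg_int.const_mul (1 + C₀))
    · exact ((measurable_id.sub_const K).mul hDT_meas).aestronglyMeasurable
    · filter_upwards [ae_restrict_mem measurableSet_Ioi] with x hx
      rw [mem_Ioi] at hx
      rw [Real.norm_eq_abs, abs_of_nonneg (mul_nonneg (by linarith) (hDT_nonneg x))]
      calc (x - K) * DT x ≤ (x - K) * ((1 + C₀) * g x) := by
            apply mul_le_mul_of_nonneg_left (hDTle x hx) (by linarith)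
      _ = (1 + C₀) * ((x - K) * g x) := by ring
  have hdiff_int : IntegrableOn (fun x => (x - K) * (DT x - g x)) (Ioi K) := by
    apply IntegrableOn.congr_fun (hfDT_int.sub hfg_int) _ measurableSet_Ioi
    intro x _
    simp only [Pi.sub_apply]
    ring
  -- reduce the pricing integral to (K, ∞)
  have hI2 : ∀ x ∈ Ioi K, max (x - K) 0 * DT x = (x - K) * DT x := by
    intro x hx; rw [mem_Ioi] at hx; rw [max_eq_left (by linarith)]
  have hint_top : IntegrableOn (fun x => max (x - K) 0 * DT x) (Ioi K) :=
    IntegrableOn.congr_fun hfDT_int (fun x hx => (hI2 x hx).symm) measurableSet_Ioi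
  have hI1 : ∀ x ∈ Ioc (0:ℝ) K, max (x - K) 0 * DT x = 0 := by
    intro x hx; rw [max_eq_right (by linarith [hx.2]), zero_mul]
  have hint_bot : IntegrableOn (fun x => max (x - K) 0 * DT x) (Ioc 0 K) := by
    apply IntegrableOn.congr_fun integrableOn_zero
      (fun x hx => (hI1 x hx).symm) measurableSet_Ioc
  have hCK : (∫ x in Ioi (0:ℝ), max (x - K) 0 * DT x) = ∫ x in Ioi K, (x - K) * DT x := by
    rw [← Ioc_union_Ioi_eq_Ioi hK0.le,
      setIntegral_union (Ioc_disjoint_Ioi le_rfl) measurableSet_Ioi hint_bot hint_top,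
      setIntegral_congr_fun measurableSet_Ioc hI1,
      setIntegral_congr_fun measurableSet_Ioi hI2]
    simp
  -- the approximating integral J
  obtain ⟨J, hJdef⟩ : ∃ J : ℝ, J = ∫ x in Ioi K, (x - K) * g x := ⟨_, rfl⟩
  have hJ_up : J ≤ Q / ((r₃ - δ - 1) * (r₃ - δ - 2)) := by
    have h1 : J ≤ ∫ x in Ioi K, (r₁ * E * L ^ r₄ * K ^ (-δ)) * ((x - K) * x ^ (-(r₃ - δ))) := by
      rw [hJdef]
      exact setIntegral_mono_on hfg_int hIu measurableSet_Ioi hup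
    rw [integral_const_mul, aux_integral hsm hK0] at h1
    have hKpow : K ^ (-δ) * K ^ (2 - (r₃ - δ)) = K ^ (2 - r₃) := by
      rw [← Real.rpow_add hK0]; congr 1; ring
    have e : r₁ * E * L ^ r₄ * K ^ (-δ) * (K ^ (2 - (r₃ - δ)) / ((r₃ - δ - 1) * (r₃ - δ - 2)))
        = Q / ((r₃ - δ - 1) * (r₃ - δ - 2)) := by
      rw [hQdef, ← hKpow]; ring
    rw [e] at h1; exact h1
  have hJ_lo : Q / ((r₃ + δ - 1) * (r₃ + δ - 2)) ≤ J := by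
    have h1 : (∫ x in Ioi K, (r₁ * E * L ^ r₄ * K ^ δ) * ((x - K) * x ^ (-(r₃ + δ)))) ≤ J := by
      rw [hJdef]
      exact setIntegral_mono_on hIl hfg_int measurableSet_Ioi hlo
    rw [integral_const_mul, aux_integral hsp hK0] at h1
    have hKpow : K ^ δ * K ^ (2 - (r₃ + δ)) = K ^ (2 - r₃) := by
      rw [← Real.rpow_add hK0]; congr 1; ring
    have e : r₁ * E * L ^ r₄ * K ^ δ * (K ^ (2 - (r₃ + δ)) / ((r₃ + δ - 1) * (r₃ + δ - 2)))
        = Q / ((r₃ + δ - 1) * (r₃ + δ - 2)) := by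
      rw [hQdef, ← hKpow]; ring
    rw [e] at h1; exact h1
  have hDm_lb : (r₃ - 2)^2 / 4 ≤ (r₃ - δ - 1) * (r₃ - δ - 2) := dm_lb hr₃ hδ0 hδhalf
  have hDm_pos : (0:ℝ) < (r₃ - 2)^2 / 4 := by
    have : (0:ℝ) < r₃ - 2 := by linarith
    positivity
  have hDp_pos : (0:ℝ) < (r₃ + δ - 1) * (r₃ + δ - 2) :=
    mul_pos (by linarith) (by linarith)
  have hJ_up2 : J ≤ Q * (4 / (r₃ - 2)^2) := by
    have h1 : Q / ((r₃ - δ - 1) * (r₃ - δ - 2)) ≤ Q / ((r₃ - 2)^2 / 4) :=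
      div_le_div_of_nonneg_left hQ.le hDm_pos hDm_lb
    have h2 : Q / ((r₃ - 2)^2 / 4) = Q * (4 / (r₃ - 2)^2) := by
      rw [div_div_eq_mul_div, mul_comm Q 4, mul_div_assoc]; ring
    linarith
  have hJ0 : 0 ≤ J := le_trans (le_of_lt (div_pos hQ hDp_pos)) hJ_lo
  -- the error integral T
  obtain ⟨T, hTdef⟩ : ∃ T : ℝ, T = ∫ x in Ioi K, (x - K) * (DT x - g x) := ⟨_, rfl⟩
  have hsplit2 : (∫ x in Ioi K, (x - K) * DT x) = T + J := by
    rw [hTdef, hJdef, ← integral_add hdiff_int hfg_int]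
    apply setIntegral_congr_fun measurableSet_Ioi
    intro x _
    simp only [Pi.add_apply]
    ring
  -- pointwise bound for the error integrand
  have hptwise : ∀ x ∈ Ioi K, |(x - K) * (DT x - g x)| ≤ (C₀ * ν) * ((x - K) * g x) := by
    intro x hx
    rw [mem_Ioi] at hx
    have hx1 : (1:ℝ) < x := lt_trans hK1 hx
    have hlgx : L ≤ Real.log x := by
      rw [hLdef]; exact Real.log_le_log hK0 hx.le
    have hlx1 : (1:ℝ) ≤ Real.log x := le_trans hL1 hlgx
    have h := hx₀ x (le_trans hKx₀ hx.le)
    have hgx : 0 < g x := hgpos x hx1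
    have hgx_eq : g x
        = r₁ * x ^ (-r₃) * Real.exp (r₂ * Real.sqrt (Real.log x)) * Real.log x ^ r₄ := by
      rw [hgdef]
    rw [← hgx_eq] at h
    rw [Real.norm_eq_abs, Real.norm_eq_abs] at h
    have hpnn : (0:ℝ) ≤ Real.log x ^ (-(1:ℝ)/2) := Real.rpow_nonneg (by linarith) _
    have hpow : Real.log x ^ (-(1:ℝ)/2) ≤ ν := by
      rw [hνdef]
      exact Real.rpow_le_rpow_of_nonpos hL0 hlgx (by norm_num)
    have h2 : |DT x - g x| ≤ C₀ * ν * g x := by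
      calc |DT x - g x| ≤ c * |g x * Real.log x ^ (-(1:ℝ)/2)| := h
      _ ≤ C₀ * |g x * Real.log x ^ (-(1:ℝ)/2)| :=
            mul_le_mul_of_nonneg_right (hC₀def ▸ le_abs_self c) (abs_nonneg _)
      _ = C₀ * (g x * Real.log x ^ (-(1:ℝ)/2)) := by
            rw [abs_of_nonneg (mul_nonneg hgx.le hpnn)]
      _ ≤ C₀ * (g x * ν) := by
            apply mul_le_mul_of_nonneg_left _ hC₀
            exact mul_le_mul_of_nonneg_left hpow hgx.le
      _ = C₀ * ν * g x := by ring
    calc |(x - K) * (DT x - g x)| = (x - K) * |DT x - g x| := by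
          rw [abs_mul, abs_of_nonneg (show (0:ℝ) ≤ x - K by linarith)]
    _ ≤ (x - K) * (C₀ * ν * g x) :=
          mul_le_mul_of_nonneg_left h2 (by linarith)
    _ = (C₀ * ν) * ((x - K) * g x) := by ring
  have hT1 : |T| ≤ C₀ * ν * J := by
    rw [hTdef]
    have hn := norm_integral_le_integral_norm (μ := volume.restrict (Ioi K))
      (f := fun x => (x - K) * (DT x - g x))
    simp only [Real.norm_eq_abs] at hn
    have hmono : (∫ x in Ioi K, |(x - K) * (DT x - g x)|)
        ≤ ∫ x in Ioi K, (C₀ * ν) * ((x - K) * g x) :=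
      setIntegral_mono_on hdiff_int.abs (hfg_int.const_mul _) measurableSet_Ioi hptwise
    rw [integral_const_mul, ← hJdef] at hmono
    calc |∫ x in Ioi K, (x - K) * (DT x - g x)|
        ≤ ∫ x in Ioi K, |(x - K) * (DT x - g x)| := hn
    _ ≤ C₀ * ν * J := hmono
  -- comparison of J with Q/D
  have hfr1 : 1/((r₃ - δ - 1) * (r₃ - δ - 2)) - 1/D ≤ c₂ * δ := by
    have h := frac_bound_upper (s := r₃) hr₃ hδ0 hδhalf
    rw [← hDdef] at h
    rw [hc₂def]
    exact h
  have hfr2 : 1/D - 1/((r₃ + δ - 1) * (r₃ + δ - 2)) ≤ c₂ * δ := by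
    have h := frac_bound_lower (s := r₃) hr₃ hδ0 hδhalf
    rw [← hDdef] at h
    rw [hc₂def]
    exact h
  have hJA1 : J - Q / D ≤ Q * (c₂ * δ) := by
    have e1 : Q / ((r₃ - δ - 1) * (r₃ - δ - 2)) - Q / D
        = Q * (1/((r₃ - δ - 1) * (r₃ - δ - 2)) - 1/D) := by ring
    have e2 := mul_le_mul_of_nonneg_left hfr1 hQ.le
    linarith
  have hJA2 : Q / D - J ≤ Q * (c₂ * δ) := by
    have e1 : Q / D - Q / ((r₃ + δ - 1) * (r₃ + δ - 2))
        = Q * (1/D - 1/((r₃ + δ - 1) * (r₃ + δ - 2))) := by ring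
    have e2 := mul_le_mul_of_nonneg_left hfr2 hQ.le
    linarith
  have hδν : δ ≤ B * ν := by
    rw [hν, ← div_eq_mul_inv]
    exact hδB
  -- final assembly
  rw [Real.norm_eq_abs, Real.norm_eq_abs, ← hDdef, ← hLdef, ← hEdef, ← hνdef, hCK, hsplit2]
  have hA : r₁ / D * L ^ r₄ * E * K ^ (2 - r₃) = Q / D := by rw [hQdef]; ring
  rw [hA, abs_of_pos (mul_pos (div_pos hQ hD) hν0)]
  have habs : |T + J - Q / D| ≤ |T| + |J - Q / D| := by
    have e : T + J - Q / D = T + (J - Q / D) := by ring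
    rw [e]; exact abs_add_le _ _
  have hJQ : |J - Q / D| ≤ Q * (c₂ * δ) := abs_le.mpr ⟨by linarith, by linarith⟩
  have hb1 : |T| ≤ C₀ * (4 / (r₃ - 2)^2) * (Q * ν) := by
    calc |T| ≤ C₀ * ν * J := hT1
    _ ≤ C₀ * ν * (Q * (4 / (r₃ - 2)^2)) :=
          mul_le_mul_of_nonneg_left hJ_up2 (by positivity)
    _ = C₀ * (4 / (r₃ - 2)^2) * (Q * ν) := by ring
  have hb2 : |J - Q / D| ≤ c₂ * B * (Q * ν) := by
    calc |J - Q / D| ≤ Q * (c₂ * δ) := hJQ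
    _ ≤ Q * (c₂ * (B * ν)) := by
          apply mul_le_mul_of_nonneg_left _ hQ.le
          exact mul_le_mul_of_nonneg_left hδν hc₂.le
    _ = c₂ * B * (Q * ν) := by ring
  have hfin : D * (C₀ * (4 / (r₃ - 2)^2) + c₂ * B) * (Q / D * ν)
      = C₀ * (4 / (r₃ - 2)^2) * (Q * ν) + c₂ * B * (Q * ν) := by
    field_simp
  linarith
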